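/- A word w belongs to udom(f·g) if and only if there is a unique factorization w = u·v with u ∈ dom(f) and v ∈ dom(g), and moreover this factorization satisfies u ∈ udom(f) and v ∈ udom(g). -/
import Mathlib


/-- Elementwise concatenation of languages. -/
def setConcat {σ : Type*} (A B : Set (List σ)) : Set (List σ) :=
  {w | ∃ u ∈ A, ∃ v ∈ B, w = u ++ v}

/-- Unambiguous domain of a Cauchy product:
`udom(f·g) = (udom f · udom g) \ { u v x | v ≠ ε ∧ u, uv ∈ dom f ∧ vx, x ∈ dom g }`. -/
def udomProd {σ : Type*} (udomF udomG domF domG : Set (List σ)) : Set (List σ) :=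
  setConcat udomF udomG \
    {w | ∃ u v x, w = u ++ v ++ x ∧ v ≠ [] ∧ u ∈ domF ∧ u ++ v ∈ domF ∧
          v ++ x ∈ domG ∧ x ∈ domG}

theorem mem_udomProd_iff {σ : Type*}
    (udomF udomG domF domG : Set (List σ))
    (hF : udomF ⊆ domF) (hG : udomG ⊆ domG) (w : List σ) :
    w ∈ udomProd udomF udomG domF domG ↔
      ∃ u v, w = u ++ v ∧ u ∈ domF ∧ v ∈ domG ∧
        (∀ u' v', w = u' ++ v' → u' ∈ domF → v' ∈ domG → u' = u ∧ v' = v) ∧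
        u ∈ udomF ∧ v ∈ udomG := by
  constructor
  · rintro ⟨⟨u, hu, v, hv, rfl⟩, hbad⟩
    refine ⟨u, v, rfl, hF hu, hG hv, ?_, hu, hv⟩
    intro u' v' heq hu' hv'
    rcases List.append_eq_append_iff.mp heq with ⟨m, rfl, hm⟩ | ⟨m, rfl, hm⟩
    · rcases eq_or_ne m [] with rfl | hne
      · simp_all
      · exact absurd ⟨u, m, v', by simp [heq], hne, hF hu, hu', by rw [← hm]; exact hG hv, hv'⟩ hbad
    · rcases eq_or_ne m [] with rfl | hne
      · simp_all
      · exact absurd ⟨u', m, v, by simp, hne, hu', hF hu, by rw [← hm]; exact hv', hG hv⟩ hbad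
  · rintro ⟨u, v, rfl, hud, hvd, huniq, hu, hv⟩
    refine ⟨⟨u, hu, v, hv, rfl⟩, ?_⟩
    rintro ⟨a, b, c, heq, hb, ha, hab, hbc, hc⟩
    have h1 := huniq a (b ++ c) (by simp [heq]) ha hbc
    have h2 := huniq (a ++ b) c (by simp [heq]) hab hc
    have : a = a ++ b := h1.1.trans h2.1.symm
    simp at this
    exact hb this
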